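/- arXiv:math/9811046 — 3 statements merged into one kernel-verified Lean document; each statement's English description precedes it below -/
import Mathlib

section
/- Let M be an (n-1)-dimensional C^1 submanifold of R^n and let f : M → R be a Lipschitz function. Then f is differentiable (in the sense of being the restriction of a function on an open neighborhood in R^n that is differentiable at the point) at H^{n-1}-almost all points of M. -/
open MeasureTheory Metric Set Filter
open scoped ENNReal Topology

/-- `M` is an `(n-1)`-dimensional `C¹` submanifold (hypersurface) of `ℝⁿ`:
locally it is the zero set of a `C¹` function with nonvanishing differential. -/
def IsC1Hypersurface {n : ℕ} (M : Set (EuclideanSpace ℝ (Fin n))) : Prop :=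
  ∀ x ∈ M, ∃ (U : Set (EuclideanSpace ℝ (Fin n))) (F : EuclideanSpace ℝ (Fin n) → ℝ),
    IsOpen U ∧ x ∈ U ∧ ContDiffOn ℝ 1 F U ∧ (∀ y ∈ U, fderiv ℝ F y ≠ 0) ∧
    M ∩ U = {y ∈ U | F y = 0}

/-- Lemma 2.2: a Lipschitz function on a `C¹` hypersurface `M ⊂ ℝⁿ` is, at
`H^{n-1}`-almost every point of `M`, the restriction of a function on an open
neighborhood in `ℝⁿ` that is differentiable at that point. -/
theorem lipschitz_on_hypersurface_differentiable_ae {n : ℕ}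
    (M : Set (EuclideanSpace ℝ (Fin n))) (hM : IsC1Hypersurface M)
    (f : EuclideanSpace ℝ (Fin n) → ℝ) (K : NNReal) (hf : LipschitzOnWith K f M) :
    μH[(n : ℝ) - 1] {x ∈ M | ¬ ∃ (U : Set (EuclideanSpace ℝ (Fin n)))
        (g : EuclideanSpace ℝ (Fin n) → ℝ),
      IsOpen U ∧ x ∈ U ∧ DifferentiableAt ℝ g x ∧ Set.EqOn f g (M ∩ U)} = 0 := by
  rcases Nat.eq_zero_or_pos n with hn | hn
  · -- degenerate case `n = 0`: `M` must be empty.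
    subst hn
    haveI : Subsingleton (EuclideanSpace ℝ (Fin 0)) :=
      ⟨fun a b => by ext i; exact i.elim0⟩
    have hM0 : M = ∅ := by
      rw [eq_empty_iff_forall_notMem]
      intro x hx
      obtain ⟨U, F, _, hxU, _, hF', _⟩ := hM x hx
      exact hF' x hxU (ContinuousLinearMap.ext fun v => by
        rw [Subsingleton.elim v (0 : EuclideanSpace ℝ (Fin 0)), map_zero, map_zero])
    have hempty : {x ∈ M | ¬ ∃ (U : Set (EuclideanSpace ℝ (Fin 0)))
        (g : EuclideanSpace ℝ (Fin 0) → ℝ),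
        IsOpen U ∧ x ∈ U ∧ DifferentiableAt ℝ g x ∧ Set.EqOn f g (M ∩ U)} = ∅ := by
      rw [hM0]; ext x; simp
    rw [hempty]; exact measure_empty
  -- main case `n ≥ 1`
  have hd0 : (0 : ℝ) ≤ (n : ℝ) - 1 := by
    have : (1 : ℝ) ≤ (n : ℝ) := by exact_mod_cast hn
    linarith
  set m := n - 1 with hmdef
  have hmcast : ((m : ℕ) : ℝ) = (n : ℝ) - 1 := by
    rw [hmdef]
    push_cast [Nat.cast_sub hn]
    ring
  have hμP : (μH[(n : ℝ) - 1] : Measure (Fin m → ℝ)) = volume := by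
    rw [← hmcast]
    have h := hausdorffMeasure_pi_real (ι := Fin m)
    rwa [Fintype.card_fin] at h
  apply measure_null_of_locally_null
  intro a ha
  obtain ⟨haM, -⟩ := ha
  obtain ⟨U, F, hUopen, haU, hFc, hF', hMU⟩ := hM a haM
  have haF : F a = 0 := by
    have haMU : a ∈ M ∩ U := ⟨haM, haU⟩
    rw [hMU] at haMU; exact haMU.2
  have hsd : HasStrictFDerivAt F (fderiv ℝ F a) a :=
    (hFc.contDiffAt (hUopen.mem_nhds haU)).hasStrictFDerivAt one_ne_zero
  set f' := fderiv ℝ F a with hf'def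
  have hf'ne : f' ≠ 0 := hF' a haU
  have hrange : f'.range = ⊤ := by
    have hv : ∃ v, f' v ≠ 0 := by
      by_contra h
      push_neg at h
      exact hf'ne (ContinuousLinearMap.ext fun v => by simpa using h v)
    obtain ⟨v, hv⟩ := hv
    rw [LinearMap.range_eq_top]
    intro r
    exact ⟨(r / f' v) • v, by rw [map_smul, smul_eq_mul]; exact div_mul_cancel₀ _ hv⟩
  have hker : (f'.ker).ClosedComplemented :=
    f'.ker_closedComplemented_of_finiteDimensional_range
  set π := Classical.choose hker with hπdef
  -- dimension count
  have hkerrank : Module.finrank ℝ (f'.ker) = m := by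
    have h1 := LinearMap.finrank_range_add_finrank_ker
      (f' : EuclideanSpace ℝ (Fin n) →ₗ[ℝ] ℝ)
    have h2 : Module.finrank ℝ (f'.range) = 1 := by
      rw [hrange, finrank_top, Module.finrank_self]
    have hcoe : LinearMap.ker (f' : EuclideanSpace ℝ (Fin n) →ₗ[ℝ] ℝ) = f'.ker :=
      rfl
    have hcoe2 : LinearMap.range (f' : EuclideanSpace ℝ (Fin n) →ₗ[ℝ] ℝ) =
        f'.range := rfl
    rw [finrank_euclideanSpace_fin, hcoe, hcoe2, h2] at h1
    rw [hmdef]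
    omega
  have hPrank : Module.finrank ℝ (Fin m → ℝ) = m := by
    rw [Module.finrank_fintype_fun_eq_card, Fintype.card_fin]
  set e := (LinearEquiv.ofFinrankEq (Fin m → ℝ) (f'.ker)
      (by rw [hPrank, hkerrank])).toContinuousLinearEquiv with hedef
  set ψ := hsd.implicitToOpenPartialHomeomorphOfComplemented F f' hrange hker with hψdef
  set φ := hsd.implicitFunctionOfComplemented F f' hrange hker with hφdef
  have hφ0 : φ 0 0 = a := by
    have h := hsd.implicitFunctionOfComplemented_apply_image hrange hker
    rwa [haF] at h
  have hstrict : HasStrictFDerivAt (φ 0) (f'.ker).subtypeL 0 := by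
    have h := hsd.to_implicitFunctionOfComplemented hrange hker
    rwa [haF] at h
  obtain ⟨C, t₁, ht₁, hlip⟩ := hstrict.exists_lipschitzOnWith
  have hmap : ∀ᶠ p : ℝ × (f'.ker) in 𝓝 (F a, 0), F (φ p.1 p.2) = p.1 :=
    hsd.map_implicitFunctionOfComplemented_eq hrange hker
  have hFγ : ∀ᶠ z : (f'.ker) in 𝓝 0, F (φ 0 z) = 0 := by
    have hcont : Tendsto (fun z : (f'.ker) => ((0 : ℝ), z)) (𝓝 0) (𝓝 (F a, 0)) := by
      rw [haF]
      exact (continuous_const.prodMk continuous_id).tendsto 0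
    exact hcont.eventually hmap
  have hγU : ∀ᶠ z : (f'.ker) in 𝓝 0, φ 0 z ∈ U := by
    have hU0 : U ∈ 𝓝 (φ 0 0) := by rw [hφ0]; exact hUopen.mem_nhds haU
    exact hstrict.continuousAt.eventually_mem hU0
  have ht₁' : ∀ᶠ z : (f'.ker) in 𝓝 0, z ∈ t₁ := eventually_of_mem ht₁ fun z hz => hz
  have hall : ∀ᶠ z : (f'.ker) in 𝓝 0, z ∈ t₁ ∧ φ 0 z ∈ M ∩ U := by
    filter_upwards [hFγ, hγU, ht₁'] with z h1 h2 h3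
    refine ⟨h3, ?_⟩
    rw [hMU]; exact ⟨h2, h1⟩
  have hPall : ∀ᶠ y : (Fin m → ℝ) in 𝓝 0, e y ∈ t₁ ∧ φ 0 (e y) ∈ M ∩ U := by
    have hte : Tendsto (fun y : (Fin m → ℝ) => e y) (𝓝 0) (𝓝 0) := by
      have := e.continuous.tendsto (0 : Fin m → ℝ)
      rwa [map_zero] at this
    exact hte.eventually hall
  obtain ⟨s, hs, hsopen, hs0⟩ := _root_.eventually_nhds_iff.1 hPall
  -- the local parametrization of `M` and its projection
  set γ' : (Fin m → ℝ) → EuclideanSpace ℝ (Fin n) := fun y => (φ 0 (e y) : _) with hγ'def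
  set L : EuclideanSpace ℝ (Fin n) →L[ℝ] (Fin m → ℝ) :=
    ((e.symm : (f'.ker) →L[ℝ] (Fin m → ℝ)).comp π) with hLdef
  set πa : EuclideanSpace ℝ (Fin n) → (Fin m → ℝ) := fun x => L (x - a) with hπadef
  have hγ'lip : LipschitzOnWith (C * ‖(e : (Fin m → ℝ) →L[ℝ] (f'.ker))‖₊) γ' s :=
    hlip.comp ((e : (Fin m → ℝ) →L[ℝ] (f'.ker)).lipschitz.lipschitzOnWith)
      fun y hy => (hs y hy).1
  have hh : LipschitzOnWith (K * (C * ‖(e : (Fin m → ℝ) →L[ℝ] (f'.ker))‖₊))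
      (f ∘ γ') s :=
    hf.comp hγ'lip fun y hy => ((hs y hy).2).1
  obtain ⟨g₀, hg₀lip, hg₀eq⟩ := hh.extend_real
  set D := {y : Fin m → ℝ | ¬ DifferentiableAt ℝ g₀ y} with hDdef
  have hD : volume D = 0 := by
    have h := hg₀lip.ae_differentiableAt (μ := volume)
    rwa [ae_iff] at h
  have hDH : (μH[(n : ℝ) - 1] : Measure (Fin m → ℝ)) D = 0 := by rw [hμP]; exact hD
  obtain ⟨W, hW, hWopen, haW⟩ :=
    _root_.eventually_nhds_iff.1 (hsd.eq_implicitFunctionOfComplemented hrange hker)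
  have hψ2 : ∀ x, (ψ x).2 = π (x - a) := fun x => by
    rw [hψdef, hsd.implicitToOpenPartialHomeomorphOfComplemented_apply hrange hker, hπdef]
  have key : ∀ x ∈ M ∩ (U ∩ W), γ' (πa x) = x := by
    intro x hx
    have hFx : F x = 0 := by
      have : x ∈ M ∩ U := ⟨hx.1, hx.2.1⟩
      rw [hMU] at this; exact this.2
    have h1 := hW x hx.2.2
    rw [hFx] at h1
    show φ 0 (e (e.symm (π (x - a)))) = x
    rw [e.apply_symm_apply, ← hψ2 x]
    exact h1
  set V := (U ∩ W) ∩ πa ⁻¹' s with hVdef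
  have hπacont : Continuous πa := L.continuous.comp (continuous_id.sub continuous_const)
  have hVopen : IsOpen V := (hUopen.inter hWopen).inter (hsopen.preimage hπacont)
  have haV : a ∈ V := by
    refine ⟨⟨haU, haW⟩, ?_⟩
    show L (a - a) ∈ s
    rw [sub_self, map_zero]
    exact hs0
  set Bad := {x ∈ M | ¬ ∃ (U : Set (EuclideanSpace ℝ (Fin n)))
      (g : EuclideanSpace ℝ (Fin n) → ℝ),
    IsOpen U ∧ x ∈ U ∧ DifferentiableAt ℝ g x ∧ Set.EqOn f g (M ∩ U)} with hBaddef
  refine ⟨Bad ∩ V, inter_mem_nhdsWithin Bad (hVopen.mem_nhds haV), ?_⟩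
  have hsub : Bad ∩ V ⊆ γ' '' (D ∩ s) := by
    rintro x ⟨hxBad, hxV⟩
    have hxM : x ∈ M := hxBad.1
    have hyx : γ' (πa x) = x := key x ⟨hxM, hxV.1⟩
    have hys : πa x ∈ s := hxV.2
    have hyD : πa x ∈ D := by
      by_contra hc
      rw [hDdef, mem_setOf_eq, not_not] at hc
      apply hxBad.2
      refine ⟨V, fun z => g₀ (πa z), hVopen, hxV, ?_, ?_⟩
      · have hπadiff : DifferentiableAt ℝ πa x :=
          L.differentiableAt.comp x ((differentiableAt_id.sub_const a))
        exact hc.comp x hπadiff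
      · intro z hz
        have h1 : γ' (πa z) = z := key z ⟨hz.1, hz.2.1⟩
        have h2 : πa z ∈ s := hz.2.2
        show f z = g₀ (πa z)
        rw [← hg₀eq h2]
        show f z = (f ∘ γ') (πa z)
        rw [Function.comp_apply, h1]
    exact ⟨πa x, ⟨hyD, hys⟩, hyx⟩
  have hcalc : μH[(n : ℝ) - 1] (Bad ∩ V) ≤ 0 :=
    calc μH[(n : ℝ) - 1] (Bad ∩ V) ≤ μH[(n : ℝ) - 1] (γ' '' (D ∩ s)) := measure_mono hsub
    _ ≤ ((C * ‖(e : (Fin m → ℝ) →L[ℝ] ↥(f'.ker))‖₊ : NNReal) : ℝ≥0∞) ^ ((n : ℝ) - 1) *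
        (μH[(n : ℝ) - 1] : Measure (Fin m → ℝ)) (D ∩ s) :=
      (hγ'lip.mono inter_subset_right).hausdorffMeasure_image_le hd0
    _ ≤ ((C * ‖(e : (Fin m → ℝ) →L[ℝ] ↥(f'.ker))‖₊ : NNReal) : ℝ≥0∞) ^ ((n : ℝ) - 1) *
        (μH[(n : ℝ) - 1] : Measure (Fin m → ℝ)) D :=
      mul_le_mul_right (measure_mono inter_subset_left) _
    _ = 0 := by rw [hDH, mul_zero]
  exact le_antisymm hcalc zero_le
end

section
/- Let H ⊂ R^n be a closed convex set satisfying a uniform interior sphere condition with radius d > 0: for every p ∈ ∂H there is a closed ball of radius d contained in H and containing p. Then for any two points x, y ∈ ∂H at which outward unit normals ν(x), ν(y) exist, |ν(x) − ν(y)| ≤ (1/d)|x − y|; in particular the Gauss map of ∂H is Lipschitz with constant 1/d. -/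
open Metric Set
open scoped RealInnerProductSpace

/-- `ν` is an outward unit normal to the convex body `H` at the boundary point `x`. -/
def IsOutwardUnitNormal {n : ℕ} (H : Set (EuclideanSpace ℝ (Fin n)))
    (x ν : EuclideanSpace ℝ (Fin n)) : Prop :=
  ‖ν‖ = 1 ∧ ∀ z ∈ H, (inner ℝ (z - x) ν : ℝ) ≤ 0

/-- If a ball of radius `d` inside `H` contains the boundary point `x`, its center is
`x - d • ν` where `ν` is an outward unit normal at `x`. -/
lemma center_eq_of_normal {n : ℕ} {H : Set (EuclideanSpace ℝ (Fin n))}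
    {x ν c : EuclideanSpace ℝ (Fin n)} {d : ℝ} (hd : 0 < d)
    (hν : IsOutwardUnitNormal H x ν)
    (hxc : x ∈ Metric.closedBall c d) (hball : Metric.closedBall c d ⊆ H) :
    x - c = d • ν := by
  obtain ⟨hν1, hν2⟩ := hν
  have hz : c + d • ν ∈ H := by
    apply hball
    simp [Metric.mem_closedBall, dist_eq_norm, norm_smul, abs_of_pos hd, hν1]
  have h0 := hν2 _ hz
  have hinner : (d : ℝ) ≤ ⟪x - c, ν⟫ := by
    have : ⟪c + d • ν - x, ν⟫ = -⟪x - c, ν⟫ + d * ‖ν‖ ^ 2 := by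
      rw [show c + d • ν - x = -(x - c) + d • ν by abel]
      rw [inner_add_left, inner_neg_left, inner_smul_left, real_inner_self_eq_norm_sq]
      simp only [starRingEnd_apply, star_trivial]
    rw [this, hν1] at h0; linarith
  have hxc' : ‖x - c‖ ≤ d := by
    rwa [Metric.mem_closedBall, dist_eq_norm] at hxc
  have hcs : ⟪x - c, ν⟫ ≤ ‖x - c‖ * ‖ν‖ := real_inner_le_norm _ _
  rw [hν1, mul_one] at hcs
  have hnorm : ‖x - c‖ = d := le_antisymm hxc' (le_trans hinner hcs)
  have heq : ⟪x - c, ν⟫ = ‖x - c‖ * ‖ν‖ := by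
    rw [hν1, mul_one, hnorm]; linarith
  have := (inner_eq_norm_mul_iff_real (x := x - c) (y := ν)).mp heq
  rw [hν1, hnorm, one_smul] at this
  rw [this]

/-- A closed convex set in `ℝⁿ` satisfying a uniform interior sphere condition of radius
`d > 0` has a `1/d`-Lipschitz Gauss map: `|ν(x) − ν(y)| ≤ (1/d)|x − y|`. -/
theorem gauss_map_lipschitz_of_interior_sphere {n : ℕ}
    (H : Set (EuclideanSpace ℝ (Fin n))) (hHc : Convex ℝ H) (hHcl : IsClosed H)
    (d : ℝ) (hd : 0 < d)
    (hsphere : ∀ p ∈ frontier H, ∃ c, p ∈ Metric.closedBall c d ∧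
      Metric.closedBall c d ⊆ H) :
    ∀ x ∈ frontier H, ∀ y ∈ frontier H, ∀ νx νy,
      IsOutwardUnitNormal H x νx → IsOutwardUnitNormal H y νy →
      ‖νx - νy‖ ≤ (1 / d) * ‖x - y‖ := by
  intro x hx y hy νx νy hνx hνy
  obtain ⟨cx, hxcx, hbx⟩ := hsphere x hx
  obtain ⟨cy, hycy, hby⟩ := hsphere y hy
  have hcx : x - cx = d • νx := center_eq_of_normal hd hνx hxcx hbx
  have hcy : y - cy = d • νy := center_eq_of_normal hd hνy hycy hby
  -- key point: cx + d • νy ∈ H, test against normal at y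
  have hz1 : cx + d • νy ∈ H := by
    apply hbx
    simp [Metric.mem_closedBall, dist_eq_norm, norm_smul, abs_of_pos hd, hνx.1, hνy.1]
  have hz2 : cy + d • νx ∈ H := by
    apply hby
    simp [Metric.mem_closedBall, dist_eq_norm, norm_smul, abs_of_pos hd, hνx.1, hνy.1]
  have h1 := hνy.2 _ hz1
  have h2 := hνx.2 _ hz2
  -- rewrite cx = x - d • νx, cy = y - d • νy
  have e1 : cx + d • νy - y = (x - y) - d • νx + d • νy := by
    have : cx = x - d • νx := by rw [← hcx]; abel
    rw [this]; abel
  have e2 : cy + d • νx - x = (y - x) - d • νy + d • νx := by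
    have : cy = y - d • νy := by rw [← hcy]; abel
    rw [this]; abel
  rw [e1] at h1; rw [e2] at h2
  have i1 : ⟪x - y, νy⟫ - d * ⟪νx, νy⟫ + d * ‖νy‖ ^ 2 ≤ 0 := by
    have : ⟪(x - y) - d • νx + d • νy, νy⟫
        = ⟪x - y, νy⟫ - d * ⟪νx, νy⟫ + d * ‖νy‖ ^ 2 := by
      rw [inner_add_left, inner_sub_left, inner_smul_left, inner_smul_left,
        real_inner_self_eq_norm_sq]
      simp only [starRingEnd_apply, star_trivial]
    linarith [this ▸ h1]
  have i2 : ⟪y - x, νx⟫ - d * ⟪νy, νx⟫ + d * ‖νx‖ ^ 2 ≤ 0 := by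
    have : ⟪(y - x) - d • νy + d • νx, νx⟫
        = ⟪y - x, νx⟫ - d * ⟪νy, νx⟫ + d * ‖νx‖ ^ 2 := by
      rw [inner_add_left, inner_sub_left, inner_smul_left, inner_smul_left,
        real_inner_self_eq_norm_sq]
      simp only [starRingEnd_apply, star_trivial]
    linarith [this ▸ h2]
  rw [hνy.1] at i1; rw [hνx.1] at i2
  have hsym : ⟪νy, νx⟫ = ⟪νx, νy⟫ := real_inner_comm _ _
  have hyx : ⟪y - x, νx⟫ = -⟪x - y, νx⟫ := by
    rw [show y - x = -(x - y) by abel, inner_neg_left]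
  rw [hsym, hyx] at i2
  -- combine: d * ‖νx - νy‖² ≤ ⟪x - y, νx - νy⟫
  have hnsq : ‖νx - νy‖ ^ 2 = 2 - 2 * ⟪νx, νy⟫ := by
    rw [norm_sub_sq_real, hνx.1, hνy.1]; ring
  have hkey : d * ‖νx - νy‖ ^ 2 ≤ ⟪x - y, νx - νy⟫ := by
    rw [inner_sub_right, hnsq]; linarith
  have hcs : ⟪x - y, νx - νy⟫ ≤ ‖x - y‖ * ‖νx - νy‖ := real_inner_le_norm _ _
  rcases eq_or_lt_of_le (norm_nonneg (νx - νy)) with h0 | h0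
  · rw [← h0]
    positivity
  · rw [div_mul_eq_mul_div, le_div_iff₀ hd, one_mul]
    nlinarith [le_trans hkey hcs, sq_nonneg (‖νx - νy‖)]
end

section
/- Let E ⊂ R^n be a bounded set of finite perimeter with H^{n-1}(∂E ∩ B(x,r)) ≤ C r^{n-1} density bounds, and let S ⊂ ∂E be a compact set with H^{n-7}(S) = 0. Then for every ε > 0 and every open set V ⊃ S there exists an open set W and a Lipschitz function f : R^n → [0,1] such that S ⊂ W ⊂ {f = 1}, supp f ⊂ V, and ∫_{∂E} |∇f| dH^{n-1} ≤ ε. -/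
open MeasureTheory Metric Set
open scoped ENNReal NNReal

noncomputable def divg {n : ℕ} (φ : EuclideanSpace ℝ (Fin n) → EuclideanSpace ℝ (Fin n))
    (x : EuclideanSpace ℝ (Fin n)) : ℝ :=
  ∑ i, fderiv ℝ φ x (EuclideanSpace.single i 1) i

noncomputable def totalVariation {n : ℕ} (u : EuclideanSpace ℝ (Fin n) → ℝ) : ℝ≥0∞ :=
  ⨆ (φ : EuclideanSpace ℝ (Fin n) → EuclideanSpace ℝ (Fin n)) (_ : ContDiff ℝ 1 φ)
    (_ : HasCompactSupport φ) (_ : ∀ x, ‖φ x‖ ≤ 1),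
    ENNReal.ofReal (∫ x, u x * divg φ x)

noncomputable def perimeter {n : ℕ} (E : Set (EuclideanSpace ℝ (Fin n))) : ℝ≥0∞ :=
  totalVariation (E.indicator 1)

/-! ### Auxiliary lemmas -/

lemma myPowAdd (a b : ℝ≥0∞) (p : ℕ) : (a+b)^p ≤ 2^p * (a^p + b^p) := by
  calc (a+b)^p ≤ (2 * (a ⊔ b))^p := by
        apply pow_le_pow_left₀ (zero_le)
        rcases le_total a b with h|h
        · rw [sup_eq_right.2 h, two_mul]; exact add_le_add_left h b
        · rw [sup_eq_left.2 h, two_mul]; exact add_le_add_right h a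
    _ = 2^p * (a ⊔ b)^p := mul_pow _ _ _
    _ ≤ 2^p * (a^p + b^p) := by
        gcongr
        rcases le_total a b with h|h
        · rw [sup_eq_right.2 h]; exact le_add_self
        · rw [sup_eq_left.2 h]; exact le_self_add

lemma lipschitzOnWith_weaken' {α β : Type*} [PseudoEMetricSpace α] [PseudoEMetricSpace β]
    {K K' : ℝ≥0} {f : α → β} {s : Set α} (h : LipschitzOnWith K f s) (hK : K ≤ K') :
    LipschitzOnWith K' f s :=
  fun x hx y hy => (h hx hy).trans (mul_le_mul_left (ENNReal.coe_le_coe.2 hK) _)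

lemma lipschitzOnWith_sup' {α ι : Type*} [PseudoMetricSpace α] {K : ℝ≥0} {s : Set α}
    {t : Finset ι} (ht : t.Nonempty) {g : ι → α → ℝ}
    (hg : ∀ i ∈ t, LipschitzOnWith K (g i) s) :
    LipschitzOnWith K (fun x => t.sup' ht (fun i => g i x)) s := by
  induction ht using Finset.Nonempty.cons_induction with
  | singleton a => simpa using hg a (by simp)
  | cons a u ha hu ih =>
      have h1 : LipschitzOnWith K (g a) s := hg a (by simp)
      have h2 := ih (fun i hi => hg i (Finset.mem_cons_of_mem hi))
      rw [lipschitzOnWith_iff_restrict] at h1 h2 ⊢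
      have h3 := h1.max h2
      rw [sup_idem] at h3
      convert h3 using 1
      funext y
      simp only [Set.restrict_apply, Pi.sup_apply]
      exact Finset.sup'_cons hu _

lemma cover_of_hausdorff_zero {X : Type*} [MetricSpace X] [MeasurableSpace X] [BorelSpace X]
    [Nonempty X] {p : ℕ} (hp : 1 ≤ p) {A : Set X}
    (hA : μH[(p : ℝ)] A = 0) {θ : ℝ} (hθ : 0 < θ) {η : ℝ≥0∞} (hη : 0 < η) (hηt : η ≠ ⊤) :
    ∃ (c : ℕ → X) (r : ℕ → ℝ),
      (∀ j, 0 ≤ r j ∧ r j < θ) ∧ (∀ j, 0 < r j → c j ∈ A) ∧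
      (A ⊆ ⋃ j, ball (c j) (r j)) ∧ ∑' j, ENNReal.ofReal (r j ^ p) ≤ η := by
  classical
  have hp0 : p ≠ 0 := by omega
  have h2top : ((2:ℝ≥0∞) ^ (p+2)) ≠ ⊤ := ENNReal.pow_ne_top ENNReal.ofNat_ne_top
  set η' : ℝ≥0∞ := η / 2 ^ (p + 2) with hη'def
  have hη'pos : 0 < η' := ENNReal.div_pos hη.ne' h2top
  have hη'top : η' ≠ ⊤ := (ENNReal.div_lt_top hηt (by positivity)).ne
  -- extract a cover from the Hausdorff measure being 0
  rw [Measure.hausdorffMeasure_apply] at hA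
  have h0 : (0:ℝ≥0∞) < ENNReal.ofReal (θ/4) := by positivity
  have h2 : (⨆ (_ : (0:ℝ≥0∞) < ENNReal.ofReal (θ/4)), ⨅ (t : ℕ → Set X) (_ : A ⊆ ⋃ n, t n)
      (_ : ∀ n, EMetric.diam (t n) ≤ ENNReal.ofReal (θ/4)),
      ∑' n, ⨆ _ : (t n).Nonempty, EMetric.diam (t n) ^ (p:ℝ)) ≤ 0 :=
    le_of_le_of_eq (le_iSup (fun r => ⨆ (_ : (0:ℝ≥0∞) < r), ⨅ (t : ℕ → Set X) (_ : A ⊆ ⋃ n, t n)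
      (_ : ∀ n, EMetric.diam (t n) ≤ r),
      ∑' n, ⨆ _ : (t n).Nonempty, EMetric.diam (t n) ^ (p:ℝ)) (ENNReal.ofReal (θ/4))) hA
  rw [iSup_pos h0] at h2
  have h3 : (⨅ (t : ℕ → Set X) (_ : A ⊆ ⋃ n, t n)
      (_ : ∀ n, EMetric.diam (t n) ≤ ENNReal.ofReal (θ/4)),
      ∑' n, ⨆ _ : (t n).Nonempty, EMetric.diam (t n) ^ (p:ℝ)) < η' :=
    lt_of_le_of_lt h2 hη'pos
  obtain ⟨t, h4⟩ := iInf_lt_iff.mp h3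
  obtain ⟨hcov, h5⟩ := iInf_lt_iff.mp h4
  obtain ⟨hdiam, h6⟩ := iInf_lt_iff.mp h5
  set q : ℝ := η'.toReal with hqdef
  have hq : 0 < q := ENNReal.toReal_pos hη'pos.ne' hη'top
  set β0 : ℝ := min (θ/8) (min 1 q) with hβ0def
  have hβ0 : 0 < β0 := lt_min (by linarith) (lt_min one_pos hq)
  have hβ0le1 : β0 ≤ 1 := (min_le_right _ _).trans (min_le_left _ _)
  have hβ0leq : β0 ≤ q := (min_le_right _ _).trans (min_le_right _ _)
  have hβ0p : ENNReal.ofReal (β0 ^ p) ≤ η' := by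
    have h1 : β0 ^ p ≤ β0 := pow_le_of_le_one hβ0.le hβ0le1 hp0
    calc ENNReal.ofReal (β0 ^ p) ≤ ENNReal.ofReal q :=
          ENNReal.ofReal_le_ofReal (h1.trans hβ0leq)
      _ = η' := ENNReal.ofReal_toReal hη'top
  have hbdd : ∀ j, Bornology.IsBounded (t j) := fun j =>
    Metric.isBounded_iff_ediam_ne_top.2 (((hdiam j).trans_lt ENNReal.ofReal_lt_top).ne)
  have hD : ∀ j, (EMetric.diam (t j)).toReal ≤ θ/4 := fun j =>
    ENNReal.toReal_le_of_le_ofReal (by linarith) (hdiam j)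
  have hDnn : ∀ j, 0 ≤ (EMetric.diam (t j)).toReal := fun j => ENNReal.toReal_nonneg
  have hβj : ∀ j : ℕ, 0 < β0 * (1/2)^j := fun j => by positivity
  have hβjle : ∀ j : ℕ, β0 * (1/2)^j ≤ β0 := fun j => by
    nlinarith [pow_le_one₀ (by norm_num : (0:ℝ) ≤ 1/2) (by norm_num : (1/2:ℝ) ≤ 1) (n := j), hβ0.le]
  refine ⟨fun j => if h : (t j ∩ A).Nonempty then h.choose else ‹Nonempty X›.some,
    fun j => if (t j ∩ A).Nonempty then (EMetric.diam (t j)).toReal + β0 * (1/2)^j else 0,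
    fun j => ?_, fun j => ?_, ?_, ?_⟩
  · by_cases h : (t j ∩ A).Nonempty <;> simp only [h, if_true, if_false]
    · refine ⟨by nlinarith [hDnn j, hβj j], ?_⟩
      have h2 : β0 ≤ θ/8 := min_le_left _ _
      nlinarith [hDnn j, hD j, hβjle j]
    · exact ⟨le_refl 0, hθ⟩
  · by_cases h : (t j ∩ A).Nonempty <;> simp only [h, if_true, if_false, dif_pos, dif_neg]
    · exact fun _ => h.choose_spec.2
    · exact fun h0 => absurd h0 (lt_irrefl 0)
  · intro x hx
    obtain ⟨j, hj⟩ := mem_iUnion.1 (hcov hx)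
    have h : (t j ∩ A).Nonempty := ⟨x, hj, hx⟩
    refine mem_iUnion.2 ⟨j, ?_⟩
    simp only [h, if_true, dif_pos, mem_ball]
    calc dist x h.choose ≤ (EMetric.diam (t j)).toReal :=
          Metric.dist_le_diam_of_mem (hbdd j) hj h.choose_spec.1
      _ < _ := by nlinarith [hβj j]
  · -- the sum estimate
    have key : ∀ j : ℕ, ENNReal.ofReal
        ((if (t j ∩ A).Nonempty then (EMetric.diam (t j)).toReal + β0 * (1/2)^j else 0) ^ p)
        ≤ 2^p * (⨆ _ : (t j).Nonempty, EMetric.diam (t j) ^ (p:ℝ))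
          + 2^p * ENNReal.ofReal (β0 ^ p) * (2⁻¹ : ℝ≥0∞)^j := by
      intro j
      by_cases h : (t j ∩ A).Nonempty
      · simp only [h, if_true]
        have hne : (t j).Nonempty := h.mono (inter_subset_left)
        have hd0 : 0 ≤ (EMetric.diam (t j)).toReal + β0 * (1/2)^j := by
          nlinarith [hDnn j, hβj j]
        rw [ENNReal.ofReal_pow hd0, ENNReal.ofReal_add (hDnn j) (hβj j).le,
          ENNReal.ofReal_toReal (((hdiam j).trans_lt ENNReal.ofReal_lt_top).ne)]
        calc (EMetric.diam (t j) + ENNReal.ofReal (β0 * (1/2)^j)) ^ p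
            ≤ 2^p * (EMetric.diam (t j) ^ p + ENNReal.ofReal (β0 * (1/2)^j) ^ p) :=
              myPowAdd _ _ p
          _ = 2^p * EMetric.diam (t j) ^ p + 2^p * ENNReal.ofReal (β0 * (1/2)^j) ^ p := by
              rw [mul_add]
          _ ≤ _ := by
              apply add_le_add
              · apply mul_le_mul_right
                rw [iSup_pos hne, ENNReal.rpow_natCast]
              · rw [mul_assoc]
                apply mul_le_mul_right
                calc ENNReal.ofReal (β0 * (1/2)^j) ^ p
                    = ENNReal.ofReal β0 ^ p * (ENNReal.ofReal ((1/2:ℝ))^j)^p := by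
                      rw [ENNReal.ofReal_mul hβ0.le, mul_pow,
                        ENNReal.ofReal_pow (by norm_num : (0:ℝ) ≤ 1/2)]
                  _ ≤ ENNReal.ofReal β0 ^ p * (2⁻¹:ℝ≥0∞)^j := by
                      have h12 : ENNReal.ofReal ((1/2:ℝ)) = (2⁻¹:ℝ≥0∞) := by
                        rw [ENNReal.ofReal_div_of_pos (by norm_num), ENNReal.ofReal_one,
                          ENNReal.ofReal_ofNat, one_div]
                      rw [h12]
                      apply mul_le_mul_right
                      rw [← pow_mul]
                      exact pow_le_pow_of_le_one (zero_le) (by simp)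
                        (Nat.le_mul_of_pos_right j (by omega))
                  _ = ENNReal.ofReal (β0^p) * 2⁻¹^j := by rw [ENNReal.ofReal_pow hβ0.le]
      · simp only [h, if_false, zero_pow hp0, ENNReal.ofReal_zero]
        exact zero_le
    calc (∑' j, ENNReal.ofReal
          ((if (t j ∩ A).Nonempty then (EMetric.diam (t j)).toReal + β0 * (1/2)^j else 0) ^ p))
        ≤ ∑' j, (2^p * (⨆ _ : (t j).Nonempty, EMetric.diam (t j) ^ (p:ℝ))
          + 2^p * ENNReal.ofReal (β0 ^ p) * (2⁻¹ : ℝ≥0∞)^j) := ENNReal.tsum_le_tsum key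
      _ = 2^p * (∑' j, ⨆ _ : (t j).Nonempty, EMetric.diam (t j) ^ (p:ℝ))
          + 2^p * ENNReal.ofReal (β0 ^ p) * (∑' j : ℕ, (2⁻¹ : ℝ≥0∞)^j) := by
          rw [ENNReal.tsum_add, ENNReal.tsum_mul_left, ENNReal.tsum_mul_left]
      _ ≤ 2^p * η' + 2^p * η' * 2 := by
          have hg : (∑' j : ℕ, (2⁻¹:ℝ≥0∞)^j) = 2 := by
            rw [ENNReal.tsum_geometric, ENNReal.one_sub_inv_two, inv_inv 2]
          rw [hg]
          exact add_le_add (mul_le_mul_right h6.le _)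
            (mul_le_mul_left (mul_le_mul_right hβ0p _) 2)
      _ ≤ 2^(p+2) * η' := by
          have h8 : (2:ℝ≥0∞)^(p+2) * η' = 2^p * η' + 2^p * η' * 2 + 2^p * η' := by ring
          rw [h8]
          exact le_add_right le_rfl
      _ ≤ η := by rw [hη'def]; exact ENNReal.mul_div_le

/-! ### Cone functions -/

noncomputable def coneF {X : Type*} [MetricSpace X] (c : X) (r : ℝ) (x : X) : ℝ :=
  min (max (2 - dist x c / r) 0) 1

lemma coneF_mem_Icc {X : Type*} [MetricSpace X] (c : X) (r : ℝ) (x : X) :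
    coneF c r x ∈ Set.Icc (0:ℝ) 1 :=
  ⟨le_min (le_max_right _ _) zero_le_one, min_le_right _ _⟩

lemma coneF_lipschitz {X : Type*} [MetricSpace X] {c : X} {r : ℝ} (hr : 0 < r) :
    LipschitzWith (Real.toNNReal r⁻¹) (coneF c r) := by
  have h1 : LipschitzWith (Real.toNNReal r⁻¹) (fun x : X => 2 - dist x c / r) := by
    apply LipschitzWith.of_dist_le_mul
    intro x y
    rw [Real.coe_toNNReal _ (by positivity), Real.dist_eq]
    have h0 : (2 - dist x c / r) - (2 - dist y c / r) = (dist y c - dist x c)/r := by ring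
    rw [h0, abs_div, abs_of_pos hr, div_le_iff₀ hr]
    calc |dist y c - dist x c| ≤ dist y x := abs_dist_sub_le y x c
      _ = dist x y := dist_comm y x
      _ = r⁻¹ * dist x y * r := by field_simp
  exact (h1.max_const 0).min_const 1

lemma coneF_eq_one {X : Type*} [MetricSpace X] {c x : X} {r : ℝ} (hr : 0 < r)
    (h : dist x c < r) : coneF c r x = 1 := by
  have h1 : (1:ℝ) ≤ 2 - dist x c / r := by
    have := (div_lt_one hr).2 h
    linarith
  rw [coneF, min_eq_right (le_max_of_le_left h1)]

lemma coneF_eq_zero {X : Type*} [MetricSpace X] {c x : X} {r : ℝ} (hr : 0 < r)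
    (h : 2*r < dist x c) : coneF c r x = 0 := by
  have h1 : 2 - dist x c / r ≤ 0 := by
    have h2 : (2:ℝ) < dist x c / r := (lt_div_iff₀ hr).2 (by linarith)
    linarith
  rw [coneF, max_eq_right h1, min_eq_left zero_le_one]

/-- Lemma 3.6: cutoff functions concentrating on a compact set `S ⊆ ∂E` of
`H^{n-7}`-measure zero, with arbitrarily small gradient integral over `∂E`. -/
theorem exists_cutoff_small_gradient_on_boundary {n : ℕ}
    (E : Set (EuclideanSpace ℝ (Fin n))) (hEb : Bornology.IsBounded E)
    (hEm : MeasurableSet E) (hEp : perimeter E ≠ ⊤) (C : ℝ)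
    (hdensity : ∀ x ∈ frontier E, ∃ R > 0, ∀ r ∈ Set.Ioo (0 : ℝ) R,
      μH[(n : ℝ) - 1] (frontier E ∩ Metric.ball x r) ≤ ENNReal.ofReal (C * r ^ (n - 1)))
    (S : Set (EuclideanSpace ℝ (Fin n))) (hS : IsCompact S) (hSE : S ⊆ frontier E)
    (hSmeas : μH[(n : ℝ) - 7] S = 0) :
    ∀ ε > (0 : ℝ), ∀ V : Set (EuclideanSpace ℝ (Fin n)), IsOpen V → S ⊆ V →
      ∃ (W : Set (EuclideanSpace ℝ (Fin n))) (f : EuclideanSpace ℝ (Fin n) → ℝ)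
        (K : ℝ≥0),
        IsOpen W ∧ S ⊆ W ∧ W ⊆ {x | f x = 1} ∧ LipschitzWith K f ∧
        (∀ x, f x ∈ Set.Icc (0 : ℝ) 1) ∧ tsupport f ⊆ V ∧
        (∫⁻ x in frontier E, ENNReal.ofReal ‖fderiv ℝ f x‖ ∂(μH[(n : ℝ) - 1])) ≤
          ENNReal.ofReal ε := by
  classical
  intro ε hε V hV hSV
  rcases eq_empty_or_nonempty S with rfl | hSne
  · -- trivial case : S = ∅
    refine ⟨∅, fun _ => 0, 0, isOpen_empty, by simp, by simp, ?_, fun x => ⟨le_refl _, zero_le_one⟩, ?_, ?_⟩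
    · exact LipschitzWith.const 0
    · have h1 : Function.support (fun _ : EuclideanSpace ℝ (Fin n) => (0:ℝ)) = ∅ := Function.support_zero
      rw [tsupport, h1, closure_empty]
      exact empty_subset V
    · have h2 : ∀ x : EuclideanSpace ℝ (Fin n), fderiv ℝ (fun _ : EuclideanSpace ℝ (Fin n) => (0:ℝ)) x = 0 := fun x => fderiv_const_apply 0
      simp only [h2, norm_zero, ENNReal.ofReal_zero, lintegral_zero]
      exact zero_le
  -- S nonempty
  have hn : 7 < n := by
    by_contra hn
    push_neg at hn
    have hc : (n:ℝ) - 7 ≤ 0 := by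
      have : (n:ℝ) ≤ 7 := by exact_mod_cast hn
      linarith
    have h1 : μH[(0:ℝ)] S ≤ μH[(n:ℝ)-7] S := Measure.hausdorffMeasure_mono hc S
    rw [hSmeas] at h1
    have h2 := Measure.one_le_hausdorffMeasure_zero_of_nonempty hSne
    have h3 : (1:ℝ≥0∞) ≤ 0 := h2.trans h1
    simp at h3
  set p : ℕ := n - 7 with hpdef
  have hp1 : 1 ≤ p := by omega
  have hpcast : ((p:ℕ):ℝ) = (n:ℝ) - 7 := by
    have h7 : (7:ℕ) ≤ n := by omega
    push_cast [hpdef, Nat.cast_sub h7]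
    ring
  have hSp : μH[(p:ℝ)] S = 0 := by rw [hpcast]; exact hSmeas
  obtain ⟨δ, hδpos, hδ⟩ := hS.exists_thickening_subset_open hV hSV
  set C' : ℝ := max C 0 with hC'def
  have hC'0 : 0 ≤ C' := le_max_right _ _
  set CC : ℝ := C' * 3^(n-1) + 1 with hCCdef
  have hCC : 0 < CC := by positivity
  set η0 : ℝ≥0∞ := ENNReal.ofReal (ε / CC) with hη0def
  have hη0pos : 0 < η0 := ENNReal.ofReal_pos.2 (by positivity)
  set Sk : ℕ → Set (EuclideanSpace ℝ (Fin n)) := fun k => {x ∈ S | ∀ ρ ∈ Set.Ioo (0:ℝ) (1/((k:ℝ)+1)),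
    μH[(n:ℝ)-1] (frontier E ∩ ball x ρ) ≤ ENNReal.ofReal (C * ρ^(n-1))} with hSkdef
  have hSkS : ∀ k, Sk k ⊆ S := fun k => sep_subset _ _
  have hSk0 : ∀ k, μH[(p:ℝ)] (Sk k) = 0 :=
    fun k => le_antisymm (le_trans (measure_mono (hSkS k)) hSp.le) (zero_le)
  have hScov : S ⊆ ⋃ k, Sk k := by
    intro x hx
    obtain ⟨R, hR, hRd⟩ := hdensity x (hSE hx)
    obtain ⟨k, hk⟩ := exists_nat_one_div_lt hR
    exact mem_iUnion.2 ⟨k, hx, fun ρ hρ => hRd ρ ⟨hρ.1, hρ.2.trans hk⟩⟩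
  set θf : ℕ → ℝ := fun k => min (δ/2) (min 1 (1/(3*((k:ℝ)+1)))) with hθfdef
  have hθf : ∀ k, 0 < θf k := fun k => lt_min (by linarith) (lt_min one_pos (by positivity))
  have hηk : ∀ k : ℕ, (0:ℝ≥0∞) < η0/2 * 2⁻¹^k ∧ η0/2 * (2⁻¹:ℝ≥0∞)^k ≠ ⊤ := by
    intro k
    constructor
    · apply ENNReal.mul_pos
      · exact (ENNReal.div_pos hη0pos.ne' ENNReal.ofNat_ne_top).ne'
      · exact (ENNReal.pow_pos (by simp) k).ne'
    · apply ENNReal.mul_ne_top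
      · exact (ENNReal.div_lt_top ENNReal.ofReal_ne_top (by norm_num)).ne
      · exact ENNReal.pow_ne_top (by simp [ENNReal.inv_ne_top])
  have hcc : ∀ k : ℕ, ∃ (c : ℕ → EuclideanSpace ℝ (Fin n)) (r : ℕ → ℝ),
      (∀ j, 0 ≤ r j ∧ r j < θf k) ∧ (∀ j, 0 < r j → c j ∈ Sk k) ∧
      (Sk k ⊆ ⋃ j, ball (c j) (r j)) ∧
      ∑' j, ENNReal.ofReal (r j ^ p) ≤ η0/2 * (2⁻¹:ℝ≥0∞)^k := fun k =>
    cover_of_hausdorff_zero hp1 (hSk0 k) (hθf k) (hηk k).1 (hηk k).2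
  choose cc rr hrr1 hrr2 hrcov hrsum using hcc
  set U : ℕ×ℕ → Set (EuclideanSpace ℝ (Fin n)) := fun i => ball (cc i.1 i.2) (rr i.1 i.2) with hUdef
  have hSU : S ⊆ ⋃ i, U i := by
    intro x hx
    obtain ⟨k, hk⟩ := mem_iUnion.1 (hScov hx)
    obtain ⟨j, hj⟩ := mem_iUnion.1 (hrcov k hk)
    exact mem_iUnion.2 ⟨(k,j), hj⟩
  obtain ⟨t0, ht0⟩ := hS.elim_finite_subcover U (fun i => isOpen_ball) hSU
  set t : Finset (ℕ×ℕ) := t0.filter (fun i => 0 < rr i.1 i.2) with htdef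
  have htS : S ⊆ ⋃ i ∈ t, U i := by
    intro x hx
    obtain ⟨i, hi, hxi⟩ := mem_iUnion₂.1 (ht0 hx)
    have hr : 0 < rr i.1 i.2 := by
      by_contra h
      push_neg at h
      rw [hUdef] at hxi
      simp only [ball_eq_empty.2 h] at hxi
      exact hxi
    exact mem_iUnion₂.2 ⟨i, Finset.mem_filter.2 ⟨hi, hr⟩, hxi⟩
  have ht : t.Nonempty := by
    obtain ⟨x, hx⟩ := hSne
    obtain ⟨i, hi, _⟩ := mem_iUnion₂.1 (htS hx)
    exact ⟨i, hi⟩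
  have hrpos : ∀ i ∈ t, 0 < rr i.1 i.2 := fun i hi => (Finset.mem_filter.1 hi).2
  have hmem : ∀ i ∈ t, cc i.1 i.2 ∈ Sk i.1 := fun i hi => hrr2 i.1 i.2 (hrpos i hi)
  have hrθ : ∀ i ∈ t, rr i.1 i.2 < θf i.1 := fun i _ => (hrr1 i.1 i.2).2
  have hrδ : ∀ i ∈ t, 2 * rr i.1 i.2 < δ := by
    intro i hi
    have h1 : θf i.1 ≤ δ/2 := min_le_left _ _
    have := hrθ i hi
    linarith
  have hr1 : ∀ i ∈ t, rr i.1 i.2 ≤ 1 := by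
    intro i hi
    have h1 : θf i.1 ≤ 1 := (min_le_right _ _).trans (min_le_left _ _)
    linarith [hrθ i hi]
  set g : ℕ×ℕ → EuclideanSpace ℝ (Fin n) → ℝ := fun i => coneF (cc i.1 i.2) (rr i.1 i.2) with hgdef
  set f : EuclideanSpace ℝ (Fin n) → ℝ := fun x => t.sup' ht (fun i => g i x) with hfdef
  set Kf : ℝ≥0 := t.sup' ht (fun i => Real.toNNReal (rr i.1 i.2)⁻¹) with hKfdef
  have hfle1 : ∀ x, f x ≤ 1 := fun x =>
    Finset.sup'_le _ _ fun i _ => (coneF_mem_Icc _ _ x).2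
  have hf0 : ∀ x, 0 ≤ f x := by
    intro x
    obtain ⟨i0, hi0⟩ := ht
    exact le_trans (coneF_mem_Icc (cc i0.1 i0.2) (rr i0.1 i0.2) x).1
      (Finset.le_sup' (fun i => g i x) hi0)
  have hflip : LipschitzWith Kf f := by
    rw [← lipschitzOnWith_univ]
    apply lipschitzOnWith_sup' ht
    intro i hi
    apply lipschitzOnWith_weaken' ((coneF_lipschitz (hrpos i hi)).lipschitzOnWith (s := univ))
    exact Finset.le_sup' (fun i : ℕ×ℕ => Real.toNNReal (rr i.1 i.2)⁻¹) hi
  refine ⟨⋃ i ∈ t, U i, f, Kf, isOpen_biUnion (fun i _ => isOpen_ball), htS, ?_, hflip,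
    fun x => ⟨hf0 x, hfle1 x⟩, ?_, ?_⟩
  · -- W ⊆ {f = 1}
    intro x hx
    obtain ⟨i, hi, hxi⟩ := mem_iUnion₂.1 hx
    have h1 : g i x = 1 := coneF_eq_one (hrpos i hi) (mem_ball.1 hxi)
    have h2 : (1:ℝ) ≤ f x := h1 ▸ Finset.le_sup' (fun i => g i x) hi
    exact le_antisymm (hfle1 x) h2
  · -- tsupport f ⊆ V
    have hsupp : Function.support f ⊆ ⋃ i ∈ t, closedBall (cc i.1 i.2) (2*rr i.1 i.2) := by
      intro x hx
      by_contra hxn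
      simp only [mem_iUnion₂, not_exists] at hxn
      have h1 : f x = 0 := by
        refine le_antisymm (Finset.sup'_le _ _ fun i hi => le_of_eq ?_) (hf0 x)
        refine coneF_eq_zero (hrpos i hi) ?_
        have h2 := hxn i hi
        rw [mem_closedBall, not_le] at h2
        exact h2
      exact hx h1
    have hZclosed : IsClosed (⋃ i ∈ (t:Set (ℕ×ℕ)), closedBall (cc i.1 i.2) (2*rr i.1 i.2)) :=
      t.finite_toSet.isClosed_biUnion fun i _ => isClosed_closedBall
    have h3 : tsupport f ⊆ ⋃ i ∈ t, closedBall (cc i.1 i.2) (2*rr i.1 i.2) :=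
      closure_minimal hsupp hZclosed
    refine h3.trans (le_trans ?_ hδ)
    refine iUnion₂_subset fun i hi y hy => ?_
    refine mem_thickening_iff.2 ⟨cc i.1 i.2, hSkS i.1 (hmem i hi), ?_⟩
    exact lt_of_le_of_lt (mem_closedBall.1 hy) (hrδ i hi)
  · -- the integral estimate
    set Ann : ℕ×ℕ → Set (EuclideanSpace ℝ (Fin n)) := fun i =>
      closedBall (cc i.1 i.2) (2*rr i.1 i.2) \ ball (cc i.1 i.2) (rr i.1 i.2) with hAnndef
    have hAnnMeas : ∀ i : ℕ×ℕ, MeasurableSet (Ann i) :=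
      fun i => measurableSet_closedBall.diff measurableSet_ball
    have key : ∀ x, ENNReal.ofReal ‖fderiv ℝ f x‖ ≤
        ∑ i ∈ t, (Ann i).indicator (fun _ => ENNReal.ofReal (rr i.1 i.2)⁻¹) x := by
      intro x
      set K' : ℕ×ℕ → ℝ≥0 := fun i =>
        if x ∈ Ann i then Real.toNNReal (rr i.1 i.2)⁻¹ else 0 with hK'def
      have hloc : ∀ i ∈ t, ∃ ρ : ℝ, 0 < ρ ∧ LipschitzOnWith (K' i) (g i) (ball x ρ) := by
        intro i hi
        by_cases hx : x ∈ Ann i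
        · refine ⟨1, one_pos, ?_⟩
          have hK'eq : K' i = Real.toNNReal (rr i.1 i.2)⁻¹ := by simp [hK'def, hx]
          rw [hK'eq]
          exact (coneF_lipschitz (hrpos i hi)).lipschitzOnWith (s := ball x 1)
        · have hK0 : K' i = 0 := by simp [hK'def, hx]
          rw [hK0, hAnndef, Set.mem_diff, not_and_or, not_not] at *
          rcases hx with hx | hx
          · rw [mem_closedBall, not_le] at hx
            refine ⟨dist x (cc i.1 i.2) - 2*rr i.1 i.2, by linarith, ?_⟩
            intro y hy z hz
            have hvy : g i y = 0 := by
              refine coneF_eq_zero (hrpos i hi) ?_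
              have h3 := dist_triangle x y (cc i.1 i.2)
              have h4 := mem_ball.1 hy
              rw [dist_comm y x] at h4
              linarith
            have hvz : g i z = 0 := by
              refine coneF_eq_zero (hrpos i hi) ?_
              have h3 := dist_triangle x z (cc i.1 i.2)
              have h4 := mem_ball.1 hz
              rw [dist_comm z x] at h4
              linarith
            rw [hvy, hvz]
            simp
          · have h4 := mem_ball.1 hx
            refine ⟨rr i.1 i.2 - dist x (cc i.1 i.2), by linarith, ?_⟩
            intro y hy z hz
            have hvy : g i y = 1 := by
              refine coneF_eq_one (hrpos i hi) ?_
              have h3 := dist_triangle y x (cc i.1 i.2)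
              have h5 := mem_ball.1 hy
              linarith
            have hvz : g i z = 1 := by
              refine coneF_eq_one (hrpos i hi) ?_
              have h3 := dist_triangle z x (cc i.1 i.2)
              have h5 := mem_ball.1 hz
              linarith
            rw [hvy, hvz]
            simp
      choose! ρsel hρpos hρlip using hloc
      have hρ0 : 0 < t.inf' ht ρsel := (Finset.lt_inf'_iff ht).2 (fun i hi => hρpos i hi)
      have hflips : LipschitzOnWith (t.sup' ht K') f (ball x (t.inf' ht ρsel)) := by
        apply lipschitzOnWith_sup' ht
        intro i hi
        exact lipschitzOnWith_weaken'
          ((hρlip i hi).mono (ball_subset_ball (Finset.inf'_le _ hi)))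
          (Finset.le_sup' _ hi)
      have hb : ‖fderiv ℝ f x‖ ≤ ((t.sup' ht K' : ℝ≥0) : ℝ) :=
        norm_fderiv_le_of_lipschitzOn ℝ (ball_mem_nhds x hρ0) hflips
      calc ENNReal.ofReal ‖fderiv ℝ f x‖ ≤ ((t.sup' ht K' : ℝ≥0) : ℝ≥0∞) := by
            rw [← ENNReal.ofReal_coe_nnreal]
            exact ENNReal.ofReal_le_ofReal hb
        _ ≤ ((∑ i ∈ t, K' i : ℝ≥0) : ℝ≥0∞) := by
            apply ENNReal.coe_le_coe.2
            apply Finset.sup'_le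
            intro i hi
            exact Finset.single_le_sum (fun i _ => zero_le) hi
        _ = ∑ i ∈ t, ((K' i : ℝ≥0) : ℝ≥0∞) := ENNReal.coe_finset_sum _ _
        _ = ∑ i ∈ t, (Ann i).indicator (fun _ => ENNReal.ofReal (rr i.1 i.2)⁻¹) x := by
            refine Finset.sum_congr rfl fun i hi => ?_
            by_cases hx : x ∈ Ann i
            · simp only [hK'def, hx, if_true, Set.indicator_of_mem hx]
              rfl
            · simp [hK'def, hx]
    -- per-term estimate
    have perterm : ∀ i ∈ t, ENNReal.ofReal (rr i.1 i.2)⁻¹ * μH[(n:ℝ)-1] (Ann i ∩ frontier E)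
        ≤ ENNReal.ofReal CC * ENNReal.ofReal ((rr i.1 i.2)^p) := by
      intro i hi
      have hrp := hrpos i hi
      have hr0 : rr i.1 i.2 ≠ 0 := hrp.ne'
      have hden := (hmem i hi).2
      have h3r : 3*rr i.1 i.2 ∈ Set.Ioo (0:ℝ) (1/((i.1:ℝ)+1)) := by
        constructor
        · positivity
        · have h5 : rr i.1 i.2 < 1/(3*((i.1:ℝ)+1)) :=
            lt_of_lt_of_le (hrθ i hi) ((min_le_right _ _).trans (min_le_right _ _))
          rw [lt_div_iff₀ (by positivity)] at h5
          rw [lt_div_iff₀ (by positivity)]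
          nlinarith
      have hμ := hden (3*rr i.1 i.2) h3r
      have hsub : Ann i ∩ frontier E ⊆ frontier E ∩ ball (cc i.1 i.2) (3*rr i.1 i.2) := by
        intro y hy
        exact ⟨hy.2, mem_ball.2 (lt_of_le_of_lt (mem_closedBall.1 hy.1.1) (by linarith))⟩
      calc ENNReal.ofReal (rr i.1 i.2)⁻¹ * μH[(n:ℝ)-1] (Ann i ∩ frontier E)
          ≤ ENNReal.ofReal (rr i.1 i.2)⁻¹ * ENNReal.ofReal (C * (3*rr i.1 i.2)^(n-1)) :=
            mul_le_mul_right ((measure_mono hsub).trans hμ) _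
        _ ≤ ENNReal.ofReal (rr i.1 i.2)⁻¹ * ENNReal.ofReal (C' * (3*rr i.1 i.2)^(n-1)) := by
            apply mul_le_mul_right
            apply ENNReal.ofReal_le_ofReal
            apply mul_le_mul_of_nonneg_right (le_max_left _ _) (by positivity)
        _ = ENNReal.ofReal ((rr i.1 i.2)⁻¹ * (C' * (3*rr i.1 i.2)^(n-1))) :=
            (ENNReal.ofReal_mul (by positivity)).symm
        _ ≤ ENNReal.ofReal (CC * (rr i.1 i.2)^p) := by
            apply ENNReal.ofReal_le_ofReal
            have hpow : (rr i.1 i.2)⁻¹ * (C' * (3*rr i.1 i.2)^(n-1))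
                = C' * 3^(n-1) * (rr i.1 i.2)^(n-2) := by
              have hexp : n - 1 = (n-2) + 1 := by omega
              rw [mul_pow, hexp, pow_succ]
              field_simp
              ring
            rw [hpow]
            have h1 : (rr i.1 i.2)^(n-2) ≤ (rr i.1 i.2)^p :=
              pow_le_pow_of_le_one hrp.le (hr1 i hi) (by omega)
            calc C' * 3^(n-1) * (rr i.1 i.2)^(n-2) ≤ C' * 3^(n-1) * (rr i.1 i.2)^p :=
                  mul_le_mul_of_nonneg_left h1 (by positivity)
              _ ≤ CC * (rr i.1 i.2)^p := by
                  apply mul_le_mul_of_nonneg_right _ (by positivity)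
                  rw [hCCdef]
                  linarith
        _ = ENNReal.ofReal CC * ENNReal.ofReal ((rr i.1 i.2)^p) := ENNReal.ofReal_mul hCC.le
    -- total sum estimate
    have hsumtot : ∑ i ∈ t, ENNReal.ofReal ((rr i.1 i.2)^p) ≤ η0 := by
      calc ∑ i ∈ t, ENNReal.ofReal ((rr i.1 i.2)^p)
          ≤ ∑' i : ℕ×ℕ, ENNReal.ofReal ((rr i.1 i.2)^p) := ENNReal.sum_le_tsum t
        _ = ∑' k : ℕ, ∑' j : ℕ, ENNReal.ofReal ((rr k j)^p) := ENNReal.tsum_prod'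
        _ ≤ ∑' k : ℕ, η0/2 * (2⁻¹:ℝ≥0∞)^k := ENNReal.tsum_le_tsum (fun k => hrsum k)
        _ = η0 := by
            rw [ENNReal.tsum_mul_left, ENNReal.tsum_geometric, ENNReal.one_sub_inv_two,
              inv_inv]
            exact ENNReal.div_mul_cancel two_ne_zero ENNReal.ofNat_ne_top
    calc (∫⁻ x in frontier E, ENNReal.ofReal ‖fderiv ℝ f x‖ ∂μH[(n:ℝ)-1])
        ≤ ∫⁻ x in frontier E,
            ∑ i ∈ t, (Ann i).indicator (fun _ => ENNReal.ofReal (rr i.1 i.2)⁻¹) x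
            ∂μH[(n:ℝ)-1] := lintegral_mono key
      _ = ∑ i ∈ t, ∫⁻ x in frontier E,
            (Ann i).indicator (fun _ => ENNReal.ofReal (rr i.1 i.2)⁻¹) x ∂μH[(n:ℝ)-1] :=
          lintegral_finset_sum' t
            (fun i _ => ((measurable_const).indicator (hAnnMeas i)).aemeasurable)
      _ = ∑ i ∈ t, ENNReal.ofReal (rr i.1 i.2)⁻¹ * μH[(n:ℝ)-1] (Ann i ∩ frontier E) := by
          refine Finset.sum_congr rfl fun i hi => ?_
          rw [lintegral_indicator_const (hAnnMeas i), Measure.restrict_apply (hAnnMeas i)]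
      _ ≤ ∑ i ∈ t, ENNReal.ofReal CC * ENNReal.ofReal ((rr i.1 i.2)^p) :=
          Finset.sum_le_sum perterm
      _ = ENNReal.ofReal CC * ∑ i ∈ t, ENNReal.ofReal ((rr i.1 i.2)^p) := by
          rw [Finset.mul_sum]
      _ ≤ ENNReal.ofReal CC * η0 := mul_le_mul_right hsumtot _
      _ ≤ ENNReal.ofReal ε := by
          rw [hη0def, ← ENNReal.ofReal_mul hCC.le]
          apply ENNReal.ofReal_le_ofReal
          rw [mul_div_cancel₀ ε hCC.ne']
end
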